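/- If there are fewer than two edge-independent paths between the vertex sets {r,s} and {m,n} in a connected graph, then the line outage distribution factor between edges (m,n) and (r,s) vanishes: the failure of edge (r,s) induces no flow change on edge (m,n). Equivalently, in the solution ψ of the dipole equation B ψ = q with source ν_rs, we have ψ_m = ψ_n. -/

import Mathlib

open Matrix BigOperators

/-- The weighted Laplacian of a weight function `w` on `Fin N`. -/
def lapMat {N : ℕ} (w : Fin N → Fin N → ℝ) : Matrix (Fin N) (Fin N) ℝ :=
  fun i j => if i = j then ∑ k, w i k else - w i j

/-- Symmetric, nonnegative weights with zero diagonal. -/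
def IsWeight {N : ℕ} (w : Fin N → Fin N → ℝ) : Prop :=
  (∀ i j, w i j = w j i) ∧ (∀ i j, 0 ≤ w i j) ∧ (∀ i, w i i = 0)

/-- The simple graph whose edges are the pairs with nonzero weight. -/
def wGraph {N : ℕ} (w : Fin N → Fin N → ℝ) : SimpleGraph (Fin N) where
  Adj i j := i ≠ j ∧ (w i j ≠ 0 ∨ w j i ≠ 0)
  symm := ⟨fun i j ⟨h1, h2⟩ => ⟨h1.symm, h2.symm⟩⟩
  loopless := ⟨fun i h => h.1 rfl⟩

/-- The dipole vector `ν_rs`: `+1` at `r`, `-1` at `s`, `0` elsewhere. -/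
def dipole {N : ℕ} (r s : Fin N) : Fin N → ℝ :=
  fun i => (if i = r then (1:ℝ) else 0) - (if i = s then (1:ℝ) else 0)

/-- `Bd` is the Moore-Penrose pseudoinverse of `B` (the four Penrose axioms). -/
def IsMoorePenrose {N : ℕ} (B Bd : Matrix (Fin N) (Fin N) ℝ) : Prop :=
  B * Bd * B = B ∧ Bd * B * Bd = Bd ∧ (B * Bd)ᵀ = B * Bd ∧ (Bd * B)ᵀ = Bd * B

/-- The locality factor `η(r,s) = b_rs ν_rs^T B^† ν_rs`. -/
def eta {N : ℕ} (w : Fin N → Fin N → ℝ) (Bdag : Matrix (Fin N) (Fin N) ℝ)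
    (r s : Fin N) : ℝ :=
  w r s * (dipole r s ⬝ᵥ Bdag.mulVec (dipole r s))

/-! Suppose `ψ n < ψ m`. The vertices joined to `m` through vertices of potential `≥ ψ m` form a
set `A` containing `m` but not `n`. The net current leaving `A` is a sum of nonnegative terms,
the one along `(m, n)` being positive, so `A` must contain the source `r`: there is a path from
`r` to `m` on which `ψ ≥ ψ m`. Applied to `-ψ`, which solves the dipole equation for `(s, r)`,
the same argument gives a path from `s` to `n` on which `ψ ≤ ψ n`. The two paths have no vertex,
hence no edge, in common. -/

open Finset SimpleGraph

section Superlevel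

variable {V : Type*}

def superlevelGraph (G : SimpleGraph V) (f : V → ℝ) (c : ℝ) : SimpleGraph V where
  Adj i j := G.Adj i j ∧ c ≤ f i ∧ c ≤ f j
  symm := ⟨fun _ _ ⟨h, hi, hj⟩ => ⟨h.symm, hj, hi⟩⟩
  loopless := ⟨fun i h => G.loopless.irrefl i h.1⟩

variable {G : SimpleGraph V} {f : V → ℝ} {c : ℝ}

lemma superlevelGraph_le : superlevelGraph G f c ≤ G := fun _ _ h => h.1

lemma le_of_mem_support_superlevelGraph {u v x : V} (p : (superlevelGraph G f c).Walk u v)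
    (hv : c ≤ f v) (hx : x ∈ p.support) : c ≤ f x := by
  induction p with
  | nil => rw [Walk.support_nil, List.mem_singleton] at hx; exact hx ▸ hv
  | cons h _ ih =>
    rw [Walk.support_cons, List.mem_cons] at hx
    exact hx.elim (· ▸ h.2.1) (ih hv)

end Superlevel

lemma SimpleGraph.Walk.disjoint_edges_of_disjoint_support {V : Type*} {G : SimpleGraph V}
    {a b c d : V} (p : G.Walk a b) (q : G.Walk c d) (h : p.support.Disjoint q.support) :
    p.edges.Disjoint q.edges := by
  intro e hp hq
  induction e using Sym2.ind
  exact h (p.fst_mem_support_of_mem_edges hp) (q.fst_mem_support_of_mem_edges hq)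

section Laplacian

variable {N : ℕ} {w : Fin N → Fin N → ℝ}

lemma wGraph_adj_iff (hsym : ∀ i j, w i j = w j i) (hdiag : ∀ i, w i i = 0) {i j : Fin N} :
    (wGraph w).Adj i j ↔ w i j ≠ 0 := by
  refine ⟨fun ⟨_, h⟩ => h.elim id (hsym i j ▸ ·), fun h => ⟨?_, Or.inl h⟩⟩
  rintro rfl
  exact h (hdiag i)

lemma lapMat_eq (hdiag : ∀ i, w i i = 0) :
    lapMat w = diagonal (fun i => ∑ k, w i k) - Matrix.of w := by
  ext i j
  by_cases h : i = j
  · subst h; simp [lapMat, hdiag]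
  · simp [lapMat, h]

lemma lapMat_mulVec_apply (hdiag : ∀ i, w i i = 0) (ψ : Fin N → ℝ) (i : Fin N) :
    (lapMat w *ᵥ ψ) i = ∑ j, w i j * (ψ i - ψ j) := by
  rw [lapMat_eq hdiag, sub_mulVec, Pi.sub_apply, mulVec_diagonal, sum_mul]
  simp [mulVec, dotProduct, mul_sub]

/-- Discrete divergence theorem: the currents inside `A` cancel in pairs. -/
lemma sum_lapMat_mulVec_eq_sum_compl (hsym : ∀ i j, w i j = w j i) (hdiag : ∀ i, w i i = 0)
    (ψ : Fin N → ℝ) (A : Finset (Fin N)) :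
    ∑ i ∈ A, (lapMat w *ᵥ ψ) i = ∑ i ∈ A, ∑ j ∈ Aᶜ, w i j * (ψ i - ψ j) := by
  have hinner : ∑ i ∈ A, ∑ j ∈ A, w i j * (ψ i - ψ j) = 0 := by
    have hanti : ∑ i ∈ A, ∑ j ∈ A, w i j * (ψ i - ψ j)
        = - ∑ i ∈ A, ∑ j ∈ A, w i j * (ψ i - ψ j) := by
      conv_lhs => rw [sum_comm]
      simp only [← sum_neg_distrib]
      refine sum_congr rfl fun j _ => sum_congr rfl fun i _ => ?_
      rw [hsym j i]; ring
    linarith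
  simp only [lapMat_mulVec_apply hdiag, ← sum_add_sum_compl A, sum_add_distrib, hinner,
    zero_add]

end Laplacian

lemma dipole_swap {N : ℕ} (r s : Fin N) : dipole s r = -dipole r s := by
  funext i; simp only [dipole, Pi.neg_apply]; ring

lemma sum_dipole_nonpos_of_notMem {N : ℕ} {r : Fin N} (s : Fin N) {A : Finset (Fin N)}
    (hr : r ∉ A) : ∑ i ∈ A, dipole r s i ≤ 0 := by
  by_cases hs : s ∈ A <;> simp [dipole, sum_sub_distrib, hr, hs]

section MaximumPrinciple

variable {N : ℕ} {w : Fin N → Fin N → ℝ} {ψ : Fin N → ℝ} {r s m n : Fin N}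

theorem reachable_superlevelGraph_of_lt (hw : IsWeight w) (hψ : lapMat w *ᵥ ψ = dipole r s)
    (he : (wGraph w).Adj m n) (hlt : ψ n < ψ m) :
    (superlevelGraph (wGraph w) ψ (ψ m)).Reachable r m := by
  classical
  set A := univ.filter fun i => (superlevelGraph (wGraph w) ψ (ψ m)).Reachable i m
  have hge : ∀ i ∈ A, ψ m ≤ ψ i := fun i hi => by
    obtain ⟨p⟩ := (mem_filter.1 hi).2
    exact le_of_mem_support_superlevelGraph p le_rfl p.start_mem_support
  have hcut : ∀ i ∈ A, ∀ j ∈ Aᶜ, w i j ≠ 0 → ψ j < ψ m := by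
    intro i hi j hj hij
    by_contra! hj'
    have hadj : (superlevelGraph (wGraph w) ψ (ψ m)).Adj j i :=
      ⟨((wGraph_adj_iff hw.1 hw.2.2).2 hij).symm, hj', hge i hi⟩
    exact mem_compl.1 hj (mem_filter.2 ⟨mem_univ j, hadj.reachable.trans (mem_filter.1 hi).2⟩)
  have hterm : ∀ i ∈ A, ∀ j ∈ Aᶜ, 0 ≤ w i j * (ψ i - ψ j) := by
    intro i hi j hj
    rcases eq_or_ne (w i j) 0 with h | h
    · simp [h]
    · exact mul_nonneg (hw.2.1 i j) (by linarith [hcut i hi j hj h, hge i hi])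
  have hmA : m ∈ A := mem_filter.2 ⟨mem_univ m, .rfl⟩
  have hnA : n ∈ Aᶜ := mem_compl.2 fun h => (hge n h).not_gt hlt
  have hflux : 0 < ∑ i ∈ A, ∑ j ∈ Aᶜ, w i j * (ψ i - ψ j) := by
    refine sum_pos' (fun i hi => sum_nonneg (hterm i hi)) ⟨m, hmA, ?_⟩
    refine sum_pos' (hterm m hmA) ⟨n, hnA, ?_⟩
    have hmn := (hw.2.1 m n).lt_of_ne' ((wGraph_adj_iff hw.1 hw.2.2).1 he)
    exact mul_pos hmn (by linarith)
  by_contra hr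
  have hdip := sum_dipole_nonpos_of_notMem (A := A) s fun h => hr (mem_filter.1 h).2
  rw [← hψ, sum_lapMat_mulVec_eq_sum_compl hw.1 hw.2.2] at hdip
  linarith

theorem exists_isPath_superlevel_of_lt (hw : IsWeight w) (hψ : lapMat w *ᵥ ψ = dipole r s)
    (he : (wGraph w).Adj m n) (hlt : ψ n < ψ m) :
    ∃ p : (wGraph w).Walk r m, p.IsPath ∧ ∀ x ∈ p.support, ψ m ≤ ψ x := by
  obtain ⟨p⟩ := reachable_superlevelGraph_of_lt hw hψ he hlt
  refine ⟨(p.mapLe superlevelGraph_le).toPath, (p.mapLe _).toPath.2, fun x hx => ?_⟩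
  have hx' := (p.mapLe superlevelGraph_le).support_toPath_subset_support hx
  rw [Walk.support_mapLe_eq_support] at hx'
  exact le_of_mem_support_superlevelGraph p le_rfl hx'

theorem exists_edge_disjoint_paths_of_lt (hw : IsWeight w) (hψ : lapMat w *ᵥ ψ = dipole r s)
    (he : (wGraph w).Adj m n) (hlt : ψ n < ψ m) :
    ∃ (p₁ : (wGraph w).Walk r m) (p₂ : (wGraph w).Walk s n),
      p₁.IsPath ∧ p₂.IsPath ∧ p₁.edges.Disjoint p₂.edges := by
  have hψ' : lapMat w *ᵥ (-ψ) = dipole s r := by rw [mulVec_neg, hψ, dipole_swap r s]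
  obtain ⟨p₁, hp₁, hge⟩ := exists_isPath_superlevel_of_lt hw hψ he hlt
  obtain ⟨p₂, hp₂, hle⟩ := exists_isPath_superlevel_of_lt hw hψ' he.symm (neg_lt_neg hlt)
  refine ⟨p₁, p₂, hp₁, hp₂, p₁.disjoint_edges_of_disjoint_support p₂ fun x h₁ h₂ => ?_⟩
  have h₂' := hle x h₂
  simp only [Pi.neg_apply, neg_le_neg_iff] at h₂'
  linarith [hge x h₁]

end MaximumPrinciple

theorem lodf_vanishes_without_two_independent_paths_general {N : ℕ}
    (w : Fin N → Fin N → ℝ)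
    (hw : IsWeight w)
    (r s m n : Fin N)
    (he : (wGraph w).Adj m n)
    (hindep : ¬ ∃ (a c : Fin N) (_ : a ∈ ({r, s} : Set (Fin N)))
        (_ : c ∈ ({r, s} : Set (Fin N)))
        (b d : Fin N) (_ : b ∈ ({m, n} : Set (Fin N)))
        (_ : d ∈ ({m, n} : Set (Fin N)))
        (p₁ : (wGraph w).Walk a b) (p₂ : (wGraph w).Walk c d),
        p₁.IsPath ∧ p₂.IsPath ∧ List.Disjoint p₁.edges p₂.edges)
    (ψ : Fin N → ℝ) (hψ : (lapMat w).mulVec ψ = dipole r s) :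
    ψ m = ψ n := by
  rcases lt_trichotomy (ψ m) (ψ n) with hlt | heq | hlt
  · obtain ⟨p₁, p₂, hp⟩ := exists_edge_disjoint_paths_of_lt hw hψ he.symm hlt
    exact (hindep ⟨r, s, by simp, by simp, n, m, by simp, by simp, p₁, p₂, hp⟩).elim
  · exact heq
  · obtain ⟨p₁, p₂, hp⟩ := exists_edge_disjoint_paths_of_lt hw hψ he hlt
    exact (hindep ⟨r, s, by simp, by simp, m, n, by simp, by simp, p₁, p₂, hp⟩).elim

theorem lodf_vanishes_without_two_independent_paths {N : ℕ}
    (w : Fin N → Fin N → ℝ)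
    (hw : IsWeight w) (hconn : (wGraph w).Connected)
    (r s m n : Fin N)
    (hℓ : (wGraph w).Adj r s) (he : (wGraph w).Adj m n)
    (hindep : ¬ ∃ (a c : Fin N) (_ : a ∈ ({r, s} : Set (Fin N)))
        (_ : c ∈ ({r, s} : Set (Fin N)))
        (b d : Fin N) (_ : b ∈ ({m, n} : Set (Fin N)))
        (_ : d ∈ ({m, n} : Set (Fin N)))
        (p₁ : (wGraph w).Walk a b) (p₂ : (wGraph w).Walk c d),
        p₁.IsPath ∧ p₂.IsPath ∧ List.Disjoint p₁.edges p₂.edges)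
    (ψ : Fin N → ℝ) (hψ : (lapMat w).mulVec ψ = dipole r s) :
    ψ m = ψ n :=
  lodf_vanishes_without_two_independent_paths_general w hw r s m n he hindep ψ hψ
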